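/- arXiv:1810.05741 — 5 statements merged into one kernel-verified Lean document; each statement's English description precedes it below -/
import Mathlib

section
/- Let Σ be a finite alphabet and let f : List Σ → ℝ be computed by a weighted automaton with n states (α0, (M_σ)_{σ∈Σ}, α∞). Then for every string v, the Hankel column of f at v, namely the function u ↦ f(u ++ v), equals the linear combination ∑_{i=1}^{n} (M_v α∞)_i • h_i, where h_i : List Σ → ℝ is defined by h_i(u) = (α0ᵀ M_u)_i. In particular every column of the Hankel matrix of f lies in the span of the n functions h_1, …, h_n. -/
open Matrix

/-- Every Hankel column of a function computed by a weighted automaton with `n`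
states is the linear combination `∑ i, (M_v αinf) i • h i` of the `n` functions
`h i : u ↦ (α0ᵀ M_u) i`; in particular it lies in their span. -/
theorem wa_hankel_col_in_span {A : Type*} [Fintype A] {n : ℕ}
    (α0 αinf : Fin n → ℝ) (M : A → Matrix (Fin n) (Fin n) ℝ)
    (f : List A → ℝ)
    (hf : ∀ w : List A, f w = α0 ⬝ᵥ ((w.map M).prod).mulVec αinf)
    (v : List A) :
    (fun u : List A => f (u ++ v)) =
      ∑ i : Fin n, ((v.map M).prod).mulVec αinf i •
        (fun u : List A => (Matrix.vecMul α0 (u.map M).prod) i) ∧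
    (fun u : List A => f (u ++ v)) ∈
      Submodule.span ℝ
        (Set.range fun i : Fin n => fun u : List A => (Matrix.vecMul α0 (u.map M).prod) i) := by
  have key : (fun u : List A => f (u ++ v)) =
      ∑ i : Fin n, ((v.map M).prod).mulVec αinf i •
        (fun u : List A => (Matrix.vecMul α0 (u.map M).prod) i) := by
    funext u
    rw [hf, List.map_append, List.prod_append, ← Matrix.mulVec_mulVec,
      Matrix.dotProduct_mulVec]
    simp [dotProduct, Finset.sum_apply, mul_comm]
  refine ⟨key, key ▸ Submodule.sum_mem _ fun i _ =>
    Submodule.smul_mem _ _ (Submodule.subset_span ⟨i, rfl⟩)⟩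
end

section
/- (Easy direction of Theorem 1.) Let Σ be a finite alphabet and let f : List Σ → ℝ be computed by a weighted automaton with n states. Then the Hankel rank of f, i.e. the dimension (Module.rank over ℝ) of the ℝ-linear span inside (List Σ → ℝ) of the set of Hankel rows {v ↦ f(u ++ v) : u ∈ List Σ}, is at most n; in particular it is finite. -/
/-!
Since `M_{uv} = M_u M_v`, the Hankel row of `u` is `v ↦ (α0ᵀ M_u) · (M_v α∞)`, a linear
combination, with the coordinates of `α0ᵀ M_u` as coefficients, of the `n` functions
`v ↦ (M_v α∞) i`. So all rows lie in a space spanned by `n` vectors.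
-/

open Matrix

lemma automaton_row_mem_span_coord {A R ι : Type*} [CommSemiring R] [Fintype ι] [DecidableEq ι]
    (α0 αinf : ι → R) (M : A → Matrix ι ι R) (u : List A) :
    (fun v : List A => α0 ⬝ᵥ ((u ++ v).map M).prod *ᵥ αinf) ∈
      Submodule.span R (Set.range fun i (v : List A) => ((v.map M).prod *ᵥ αinf) i) := by
  have hrow : (fun v : List A => α0 ⬝ᵥ ((u ++ v).map M).prod *ᵥ αinf) =
      ∑ i, (α0 ᵥ* (u.map M).prod) i • fun v : List A => ((v.map M).prod *ᵥ αinf) i := by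
    funext v
    rw [List.map_append, List.prod_append, ← mulVec_mulVec, dotProduct_mulVec]
    simp only [Finset.sum_apply, Pi.smul_apply, smul_eq_mul, dotProduct]
  rw [hrow]
  exact Submodule.sum_mem _ fun i _ => Submodule.smul_mem _ _ (Submodule.subset_span ⟨i, rfl⟩)

lemma rank_span_le_of_subset_span_range {K V : Type*} [Ring K] [StrongRankCondition K]
    [AddCommGroup V] [Module K V] {s : Set V} {n : ℕ} (φ : Fin n → V)
    (hs : s ⊆ Submodule.span K (Set.range φ)) :
    Module.rank K (Submodule.span K s) ≤ n := calc
  Module.rank K (Submodule.span K s) ≤ Module.rank K (Submodule.span K (Set.range φ)) :=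
    Submodule.rank_mono (Submodule.span_le.mpr hs)
  _ ≤ Cardinal.mk (Set.range φ) := rank_span_le _
  _ ≤ n := by simpa using Cardinal.mk_range_le_lift (f := φ)

theorem wa_hankel_rank_le_states_general {A : Type*} {n : ℕ}
    (α0 αinf : Fin n → ℝ) (M : A → Matrix (Fin n) (Fin n) ℝ)
    (f : List A → ℝ)
    (hf : ∀ w : List A, f w = α0 ⬝ᵥ ((w.map M).prod).mulVec αinf) :
    Module.rank ℝ
      ↥(Submodule.span ℝ
          {g : List A → ℝ | ∃ u : List A, g = fun v : List A => f (u ++ v)}) ≤ n := by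
  refine rank_span_le_of_subset_span_range
    (fun i (v : List A) => ((v.map M).prod *ᵥ αinf) i) ?_
  rintro g ⟨u, rfl⟩
  simp only [hf]
  exact automaton_row_mem_span_coord α0 αinf M u

/-- easy direction of Theorem 1: if `f : List A → ℝ` is computed by a weighted
automaton with `n` states, then the Hankel rank of `f` — the dimension of the span of the
Hankel rows `v ↦ f (u ++ v)` inside `List A → ℝ` — is at most `n` (in particular finite). -/
theorem wa_hankel_rank_le_states {A : Type*} [Fintype A] {n : ℕ}
    (α0 αinf : Fin n → ℝ) (M : A → Matrix (Fin n) (Fin n) ℝ)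
    (f : List A → ℝ)
    (hf : ∀ w : List A, f w = α0 ⬝ᵥ ((w.map M).prod).mulVec αinf) :
    Module.rank ℝ
      ↥(Submodule.span ℝ
          {g : List A → ℝ | ∃ u : List A, g = fun v : List A => f (u ++ v)}) ≤ n :=
  wa_hankel_rank_le_states_general α0 αinf M f hf
end

section
/- (Hard direction of Theorem 1.) Let Σ be a finite alphabet and let f : List Σ → ℝ be a function whose Hankel rank is finite and equal to r. Then there exists a weighted automaton with exactly r states computing f, i.e. there exist α0, α∞ ∈ ℝ^r and matrices M_σ ∈ ℝ^{r×r} for each σ ∈ Σ such that for every string w = σ1…σm one has f(w) = α0ᵀ M_{σ1}·…·M_{σm} α∞ (with the empty product equal to the identity). -/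
/-!
The Hankel row space `V` of `f` contains `f` (the row of `[]`) and is stable under the left
quotients `g ↦ (v ↦ g (σ :: v))`, since the quotient of the row of `u` is the row of `u ++ [σ]`.
Fix a basis of `V`. The left quotient by `σ` acts on coordinate vectors, from the right, by a
matrix `M σ`, and evaluation at `[]` is a linear form `αinf`. Peeling off one letter at a time,
`g w = c(g) ⬝ᵥ (M_w *ᵥ αinf)` for every `g ∈ V` with coordinate vector `c(g)`; take `g = f`.
-/

open Matrix

namespace WeightedAutomaton

variable {A R : Type*}

section Semiring

variable [Semiring R]

def leftQuotient (σ : A) : (List A → R) →ₗ[R] (List A → R) where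
  toFun g v := g (σ :: v)
  map_add' _ _ := rfl
  map_smul' _ _ := rfl

@[simp]
theorem leftQuotient_apply (σ : A) (g : List A → R) (v : List A) :
    leftQuotient σ g v = g (σ :: v) :=
  rfl

def hankelRowSpace (f : List A → R) : Submodule R (List A → R) :=
  Submodule.span R {g | ∃ u : List A, g = fun v => f (u ++ v)}

theorem mem_hankelRowSpace_self (f : List A → R) : f ∈ hankelRowSpace f :=
  Submodule.subset_span ⟨[], rfl⟩

theorem hankelRowSpace_le_comap_leftQuotient (f : List A → R) (σ : A) :
    hankelRowSpace f ≤ (hankelRowSpace f).comap (leftQuotient σ) := by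
  refine Submodule.span_le.2 ?_
  rintro _ ⟨u, rfl⟩
  refine Submodule.subset_span ⟨u ++ [σ], ?_⟩
  funext v
  simp

end Semiring

noncomputable section Representation

variable [CommSemiring R] {V : Submodule R (List A → R)}
  (hV : ∀ σ : A, V ≤ V.comap (leftQuotient σ))
  {ι : Type*} [Fintype ι] (b : Module.Basis ι R V)

def finalVector (i : ι) : R :=
  (b i : List A → R) []

theorem apply_nil_eq_dotProduct (x : V) :
    (x : List A → R) [] = b.repr x ⬝ᵥ finalVector b := by
  calc (x : List A → R) [] = ((∑ i, b.repr x i • b i : V) : List A → R) [] := by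
        rw [b.sum_repr]
    _ = b.repr x ⬝ᵥ finalVector b := by
        simp only [Submodule.coe_sum, Finset.sum_apply, Submodule.coe_smul, Pi.smul_apply,
          smul_eq_mul, dotProduct, finalVector]

variable [DecidableEq ι]

def transitionMatrix (σ : A) : Matrix ι ι R :=
  (LinearMap.toMatrix b b ((leftQuotient σ).restrict (hV σ)))ᵀ

theorem repr_leftQuotient (σ : A) (x : V) :
    b.repr ((leftQuotient σ).restrict (hV σ) x) = b.repr x ᵥ* transitionMatrix hV b σ := by
  rw [transitionMatrix, vecMul_transpose, LinearMap.toMatrix_mulVec_repr]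

theorem apply_eq_dotProduct_prod_mulVec (w : List A) (x : V) :
    (x : List A → R) w =
      b.repr x ⬝ᵥ ((w.map (transitionMatrix hV b)).prod *ᵥ finalVector b) := by
  induction w generalizing x with
  | nil => simpa using apply_nil_eq_dotProduct b x
  | cons σ w ih =>
    calc (x : List A → R) (σ :: w)
        = ((leftQuotient σ).restrict (hV σ) x : List A → R) w := rfl
      _ = (b.repr x ᵥ* transitionMatrix hV b σ) ⬝ᵥ
            ((w.map (transitionMatrix hV b)).prod *ᵥ finalVector b) := by
          rw [ih, repr_leftQuotient]
      _ = b.repr x ⬝ᵥ (((σ :: w).map (transitionMatrix hV b)).prod *ᵥ finalVector b) := by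
          rw [← dotProduct_mulVec, mulVec_mulVec, List.map_cons, List.prod_cons]

end Representation

end WeightedAutomaton

open WeightedAutomaton in
theorem wa_exists_of_finite_hankel_rank_general {A : Type*}
    (f : List A → ℝ) (r : ℕ)
    (hr : Module.rank ℝ
        ↥(Submodule.span ℝ
            {g : List A → ℝ | ∃ u : List A, g = fun v : List A => f (u ++ v)}) = r) :
    ∃ (α0 αinf : Fin r → ℝ) (M : A → Matrix (Fin r) (Fin r) ℝ),
      ∀ w : List A, f w = α0 ⬝ᵥ ((w.map M).prod).mulVec αinf := by
  change Module.rank ℝ (hankelRowSpace f) = r at hr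
  have : Module.Finite ℝ (hankelRowSpace f) := Module.finite_of_rank_eq_nat hr
  let b := Module.finBasisOfFinrankEq ℝ (hankelRowSpace f) (Module.finrank_eq_of_rank_eq hr)
  have hV := hankelRowSpace_le_comap_leftQuotient f
  exact ⟨b.repr ⟨f, mem_hankelRowSpace_self f⟩, finalVector b, transitionMatrix hV b,
    fun w => apply_eq_dotProduct_prod_mulVec hV b w ⟨f, mem_hankelRowSpace_self f⟩⟩

/-- hard direction of Theorem 1: if the Hankel rank of `f : List A → ℝ` is
finite and equal to `r`, then there is a weighted automaton with exactly `r` states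
computing `f`. -/
theorem wa_exists_of_finite_hankel_rank {A : Type*} [Fintype A]
    (f : List A → ℝ) (r : ℕ)
    (hr : Module.rank ℝ
        ↥(Submodule.span ℝ
            {g : List A → ℝ | ∃ u : List A, g = fun v : List A => f (u ++ v)}) = r) :
    ∃ (α0 αinf : Fin r → ℝ) (M : A → Matrix (Fin r) (Fin r) ℝ),
      ∀ w : List A, f w = α0 ⬝ᵥ ((w.map M).prod).mulVec αinf :=
  wa_exists_of_finite_hankel_rank_general f r hr
end

section
/- (Theorem 1, Carlyle–Paz / Fliess.) Let Σ be a finite alphabet and f : List Σ → ℝ. Then f can be computed by a weighted automaton (with some finite number of states) if and only if the Hankel rank of f is finite; and in that case, writing r for the Hankel rank, every weighted automaton computing f has at least r states and there exists a weighted automaton with exactly r states computing f, so r equals the minimal number of states of any WA computing f. -/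
open Matrix

/-! The rows `v ↦ f (u ++ v)` of the Hankel matrix of a function computed by an automaton
`(α₀, M, α∞)` are the images of the vectors `α₀ᵀ M_u` under the linear map
`x ↦ (v ↦ xᵀ M_v α∞)` out of `Kⁿ`, so the Hankel rank is at most `n`. Conversely the Hankel
span is stable under the left shifts `g ↦ (v ↦ g (a :: v))` and contains `f`; when it is
finite-dimensional, the shifts written in a basis, the coordinates of `f`, and evaluation at the
empty word form an automaton computing `f` with as many states as the Hankel rank. -/

section HankelSpan

variable {A K : Type*} [Field K]

def hankelSpan (f : List A → K) : Submodule K (List A → K) :=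
  Submodule.span K {g : List A → K | ∃ u : List A, g = fun v : List A => f (u ++ v)}

theorem mem_hankelSpan_self (f : List A → K) : f ∈ hankelSpan f :=
  Submodule.subset_span ⟨[], rfl⟩

theorem shift_mem_hankelSpan (f : List A → K) (a : A) {g : List A → K}
    (hg : g ∈ hankelSpan f) : (fun v => g (a :: v)) ∈ hankelSpan f := by
  have hmap : (hankelSpan f).map (LinearMap.funLeft K K (List.cons a)) ≤ hankelSpan f := by
    rw [hankelSpan, Submodule.map_span, Submodule.span_le]
    rintro _ ⟨_, ⟨u, rfl⟩, rfl⟩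
    exact Submodule.subset_span ⟨u ++ [a], by funext v; simp [LinearMap.funLeft]⟩
  exact hmap ⟨g, hg, rfl⟩

theorem rank_hankelSpan_le {n : ℕ} (f : List A → K) (α0 αinf : Fin n → K)
    (M : A → Matrix (Fin n) (Fin n) K)
    (hf : ∀ w : List A, f w = α0 ⬝ᵥ ((w.map M).prod).mulVec αinf) :
    Module.rank K (hankelSpan f) ≤ n := by
  let rows : (Fin n → K) →ₗ[K] (List A → K) :=
    (Matrix.of fun v : List A => (v.map M).prod *ᵥ αinf).mulVecLin
  have hspan : hankelSpan f ≤ LinearMap.range rows := by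
    rw [hankelSpan, Submodule.span_le]
    rintro _ ⟨u, rfl⟩
    refine ⟨α0 ᵥ* (u.map M).prod, funext fun v => ?_⟩
    change (v.map M).prod *ᵥ αinf ⬝ᵥ α0 ᵥ* (u.map M).prod = f (u ++ v)
    rw [hf, List.map_append, List.prod_append, ← mulVec_mulVec, dotProduct_mulVec,
      dotProduct_comm]
  have hrange : Module.rank K (LinearMap.range rows) ≤ n := by
    simpa using lift_rank_range_le rows
  exact (Submodule.rank_mono hspan).trans hrange

theorem Module.Basis.apply_eq_repr_dotProduct {ι V : Type*} [Fintype ι] [AddCommGroup V]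
    [Module K V] (b : Module.Basis ι K V) (φ : V →ₗ[K] K) (x : V) :
    φ x = b.repr x ⬝ᵥ fun i => φ (b i) := by
  conv_lhs => rw [← b.sum_repr x]
  simp only [map_sum, map_smul, smul_eq_mul, dotProduct]

theorem exists_wa_of_shift_invariant {ι : Type*} [Fintype ι] [DecidableEq ι]
    (f : List A → K) (V : Submodule K (List A → K))
    (hV : ∀ a : A, ∀ g ∈ V, (fun v => g (a :: v)) ∈ V) (hf : f ∈ V)
    (b : Module.Basis ι K V) :
    ∃ (α0 αinf : ι → K) (M : A → Matrix ι ι K),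
      ∀ w : List A, f w = α0 ⬝ᵥ ((w.map M).prod).mulVec αinf := by
  let shift : A → V →ₗ[K] V := fun a => (LinearMap.funLeft K K (List.cons a)).restrict (hV a)
  -- `shift a` sends `g` to `v ↦ g (a :: v)`, so composing shifts reverses the word: transpose.
  let M : A → Matrix ι ι K := fun a => (LinearMap.toMatrix b b (shift a))ᵀ
  let ev : List A → V →ₗ[K] K := fun w => (LinearMap.proj w).comp V.subtype
  let αinf : ι → K := fun i => ev [] (b i)
  have repr_shift (a : A) (g : V) : b.repr (shift a g) = b.repr g ᵥ* M a := by
    rw [vecMul_transpose, LinearMap.toMatrix_mulVec_repr]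
  have ev_eq (w : List A) (g : V) : ev w g = b.repr g ⬝ᵥ (w.map M).prod *ᵥ αinf := by
    induction w generalizing g with
    | nil => simpa using b.apply_eq_repr_dotProduct (ev []) g
    | cons a w ih =>
      calc ev (a :: w) g = ev w (shift a g) := rfl
        _ = b.repr g ⬝ᵥ ((a :: w).map M).prod *ᵥ αinf := by
          rw [ih, repr_shift, ← dotProduct_mulVec, List.map_cons, List.prod_cons, mulVec_mulVec]
  exact ⟨b.repr ⟨f, hf⟩, αinf, M, fun w => ev_eq w ⟨f, hf⟩⟩

theorem exists_wa_of_rank_hankelSpan_eq {r : ℕ} (f : List A → K)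
    (hr : Module.rank K (hankelSpan f) = r) :
    ∃ (α0 αinf : Fin r → K) (M : A → Matrix (Fin r) (Fin r) K),
      ∀ w : List A, f w = α0 ⬝ᵥ ((w.map M).prod).mulVec αinf := by
  have : Module.Finite K (hankelSpan f) :=
    Module.rank_lt_aleph0_iff.mp (hr ▸ Cardinal.natCast_lt_aleph0)
  exact exists_wa_of_shift_invariant f _ (shift_mem_hankelSpan f) (mem_hankelSpan_self f)
    (Module.finBasisOfFinrankEq K _ (Module.finrank_eq_of_rank_eq hr))

end HankelSpan

theorem wa_iff_finite_hankel_rank_general {A : Type*} (f : List A → ℝ) :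
    ((∃ (n : ℕ) (α0 αinf : Fin n → ℝ) (M : A → Matrix (Fin n) (Fin n) ℝ),
        ∀ w : List A, f w = α0 ⬝ᵥ ((w.map M).prod).mulVec αinf) ↔
      Module.rank ℝ
        ↥(Submodule.span ℝ
            {g : List A → ℝ | ∃ u : List A, g = fun v : List A => f (u ++ v)})
        < Cardinal.aleph0) ∧
    ∀ r : ℕ,
      Module.rank ℝ
        ↥(Submodule.span ℝ
            {g : List A → ℝ | ∃ u : List A, g = fun v : List A => f (u ++ v)}) = r →
      ((∀ (n : ℕ) (α0 αinf : Fin n → ℝ) (M : A → Matrix (Fin n) (Fin n) ℝ),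
          (∀ w : List A, f w = α0 ⬝ᵥ ((w.map M).prod).mulVec αinf) → r ≤ n) ∧
       (∃ (α0 αinf : Fin r → ℝ) (M : A → Matrix (Fin r) (Fin r) ℝ),
          ∀ w : List A, f w = α0 ⬝ᵥ ((w.map M).prod).mulVec αinf)) := by
  refine ⟨⟨?_, fun hfin => ?_⟩, fun r hr => ⟨fun n α0 αinf M hf => ?_, ?_⟩⟩
  · rintro ⟨n, α0, αinf, M, hf⟩
    exact (rank_hankelSpan_le f α0 αinf M hf).trans_lt (Cardinal.natCast_lt_aleph0)
  · obtain ⟨r, hr⟩ := Cardinal.lt_aleph0.mp hfin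
    exact ⟨r, exists_wa_of_rank_hankelSpan_eq f hr⟩
  · exact_mod_cast hr ▸ rank_hankelSpan_le f α0 αinf M hf
  · exact exists_wa_of_rank_hankelSpan_eq f hr

/-- Theorem 1, Carlyle–Paz / Fliess: `f` is computed by some weighted automaton
iff its Hankel rank is finite; and when the Hankel rank equals `r`, every WA computing `f`
has at least `r` states and some WA with exactly `r` states computes `f`, so `r` is the
minimal number of states of a WA computing `f`. -/
theorem wa_iff_finite_hankel_rank {A : Type*} [Fintype A] (f : List A → ℝ) :
    ((∃ (n : ℕ) (α0 αinf : Fin n → ℝ) (M : A → Matrix (Fin n) (Fin n) ℝ),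
        ∀ w : List A, f w = α0 ⬝ᵥ ((w.map M).prod).mulVec αinf) ↔
      Module.rank ℝ
        ↥(Submodule.span ℝ
            {g : List A → ℝ | ∃ u : List A, g = fun v : List A => f (u ++ v)})
        < Cardinal.aleph0) ∧
    ∀ r : ℕ,
      Module.rank ℝ
        ↥(Submodule.span ℝ
            {g : List A → ℝ | ∃ u : List A, g = fun v : List A => f (u ++ v)}) = r →
      ((∀ (n : ℕ) (α0 αinf : Fin n → ℝ) (M : A → Matrix (Fin n) (Fin n) ℝ),
          (∀ w : List A, f w = α0 ⬝ᵥ ((w.map M).prod).mulVec αinf) → r ≤ n) ∧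
       (∃ (α0 αinf : Fin r → ℝ) (M : A → Matrix (Fin r) (Fin r) ℝ),
          ∀ w : List A, f w = α0 ⬝ᵥ ((w.map M).prod).mulVec αinf)) :=
  wa_iff_finite_hankel_rank_general f
end

section
/- (Existence of a complete prefix-closed basis.) Let Σ be a finite alphabet and f : List Σ → ℝ a function with finite Hankel rank r. Then there exist finite sets of strings 𝒫 and 𝒮, with 𝒫 prefix-closed (every prefix of an element of 𝒫 is in 𝒫) and with the empty string λ belonging to both 𝒫 and 𝒮, such that the finite sub-block H_B ∈ ℝ^{𝒫×𝒮} with entries H_B(u,v) = f(u ++ v) has rank exactly r. -/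
/-!
The Hankel row space `V` is finite-dimensional, so finitely many rows span it, and this stays true
after closing their index set `P` under prefixes. The evaluations at single strings separate the
points of `V`, hence span its dual, so finitely many of them, at a set `S` of columns, already do.
Restricting to the columns `S` is therefore injective on `V`, and the sub-block on `P × S` has
rank `dim V = r`.
-/

open Matrix Module Submodule

theorem Submodule.exists_finset_span_image_eq {K M ι : Type*} [Semiring K] [AddCommMonoid M]
    [Module K M] (g : ι → M) (hg : (span K (Set.range g)).FG) :
    ∃ U : Finset ι, span K (g '' U) = span K (Set.range g) := by
  classical
  obtain ⟨s, hs, hspan⟩ := (fg_span_iff_fg_span_finset_subset _).mp hg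
  rw [← Set.image_univ, Finset.subset_set_image_iff] at hs
  obtain ⟨U, -, rfl⟩ := hs
  exact ⟨U, by rw [hspan, Finset.coe_image]⟩

theorem Submodule.exists_finset_eq_zero_of_forall_apply_eq_zero {K ι : Type*} [Field K]
    (W : Submodule K (ι → K)) [FiniteDimensional K W] :
    ∃ S : Finset ι, ∀ x ∈ W, (∀ i ∈ S, x i = 0) → x = 0 := by
  let ev : ι → Dual K W := fun i => (LinearMap.proj i).comp W.subtype
  have hev : span K (Set.range ev) = ⊤ := by
    refine span_eq_top_of_ne_zero fun x hx => ?_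
    obtain ⟨i, hi⟩ := Function.ne_iff.mp (Subtype.coe_ne_coe.mpr hx)
    exact ⟨ev i, Set.mem_range_self i, hi⟩
  obtain ⟨S, hS⟩ := exists_finset_span_image_eq ev (hev ▸ Module.Finite.fg_top)
  refine ⟨S, fun x hx hxS => ?_⟩
  have hker : span K (ev '' S) ≤ LinearMap.ker (Dual.eval K W ⟨x, hx⟩) := by
    rw [span_le]
    rintro _ ⟨i, hi, rfl⟩
    exact hxS i hi
  rw [hS, hev, top_le_iff, LinearMap.ker_eq_top] at hker
  exact congrArg Subtype.val
    ((forall_dual_apply_eq_zero_iff K (⟨x, hx⟩ : W)).mp fun φ => LinearMap.congr_fun hker φ)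

theorem Matrix.rank_of_block_eq_finrank_span_image {K ι κ : Type*} [Field K] (g : ι → κ → K)
    (P : Finset ι) (S : Finset κ)
    (hS : ∀ x ∈ span K (g '' P), (∀ v ∈ S, x v = 0) → x = 0) :
    (Matrix.of fun (u : P) (v : S) => g u v).rank = finrank K (span K (g '' P)) := by
  let restrict : (κ → K) →ₗ[K] (S → K) := LinearMap.funLeft K K (↑)
  have hinj : Function.Injective (restrict.domRestrict (span K (g '' P))) := by
    refine LinearMap.injective_domRestrict_iff.mpr (LinearMap.disjoint_ker.mpr fun x hx hx0 => ?_)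
    exact hS x hx fun v hv => congr_fun hx0 ⟨v, hv⟩
  have hrows : Set.range (Matrix.of fun (u : P) (v : S) => g u v).row = restrict '' (g '' P) := by
    ext y
    simp only [Set.mem_range, Set.image_image, Set.mem_image, Finset.mem_coe]
    constructor
    · rintro ⟨u, rfl⟩
      exact ⟨u, u.2, rfl⟩
    · rintro ⟨u, hu, rfl⟩
      exact ⟨⟨u, hu⟩, rfl⟩
  rw [rank_eq_finrank_span_row, hrows, span_image, ← LinearMap.range_domRestrict,
    LinearMap.finrank_range_of_inj hinj]

theorem List.exists_prefix_closed_finset_superset {α : Type*} (U : Finset (List α)) :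
    ∃ P : Finset (List α), U ⊆ P ∧ [] ∈ P ∧ ∀ w ∈ P, ∀ u : List α, u <+: w → u ∈ P := by
  classical
  have hmem : ∀ u, u ∈ (insert [] U).biUnion (fun w => w.inits.toFinset) ↔
      ∃ w ∈ insert [] U, u <+: w := by
    simp [List.mem_inits]
  refine ⟨(insert [] U).biUnion fun w => w.inits.toFinset, fun w hw => ?_, ?_, ?_⟩
  · exact (hmem w).mpr ⟨w, Finset.mem_insert_of_mem hw, List.prefix_refl w⟩
  · exact (hmem []).mpr ⟨[], Finset.mem_insert_self _ _, List.prefix_refl []⟩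
  · intro w hw u hu
    obtain ⟨x, hx, hwx⟩ := (hmem w).mp hw
    exact (hmem u).mpr ⟨x, hx, hu.trans hwx⟩

theorem exists_complete_prefix_closed_basis_general {A : Type*}
    (f : List A → ℝ) (r : ℕ)
    (hr : Module.rank ℝ
        ↥(Submodule.span ℝ
            {g : List A → ℝ | ∃ u : List A, g = fun v : List A => f (u ++ v)}) = r) :
    ∃ P S : Finset (List A),
      (∀ w ∈ P, ∀ u : List A, u <+: w → u ∈ P) ∧
      ([] : List A) ∈ P ∧ ([] : List A) ∈ S ∧
      (Matrix.of fun (u : ↥P) (v : ↥S) => f (↑u ++ ↑v)).rank = r := by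
  classical
  let H : List A → List A → ℝ := fun u v => f (u ++ v)
  have hrows : {g : List A → ℝ | ∃ u : List A, g = fun v => f (u ++ v)} = Set.range H := by
    ext; simp [H, eq_comm]
  rw [hrows] at hr
  have : FiniteDimensional ℝ (span ℝ (Set.range H)) := Module.finite_of_rank_eq_nat hr
  obtain ⟨U, hU⟩ := exists_finset_span_image_eq H (Module.Finite.iff_fg.mp this)
  obtain ⟨P, hUP, hnilP, hP⟩ := List.exists_prefix_closed_finset_superset U
  have hspanP : span ℝ (H '' P) = span ℝ (Set.range H) :=
    le_antisymm (span_mono (Set.image_subset_range _ _)) (hU ▸ span_mono (Set.image_mono hUP))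
  obtain ⟨S, hS⟩ := exists_finset_eq_zero_of_forall_apply_eq_zero (span ℝ (Set.range H))
  refine ⟨P, insert [] S, hP, hnilP, Finset.mem_insert_self _ _, ?_⟩
  rw [Matrix.rank_of_block_eq_finrank_span_image H P _ fun x hx hx0 =>
      hS x (hspanP ▸ hx) fun v hv => hx0 v (Finset.mem_insert_of_mem hv), hspanP]
  exact Module.finrank_eq_of_rank_eq hr

/-- existence of a complete prefix-closed basis: if `f : List A → ℝ` has finite
Hankel rank `r`, then there are finite sets of strings `P` (prefix-closed, containing the
empty string) and `S` (containing the empty string) such that the sub-block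
`H_B (u, v) = f (u ++ v)` over `P × S` has rank exactly `r`. -/
theorem exists_complete_prefix_closed_basis {A : Type*} [Fintype A]
    (f : List A → ℝ) (r : ℕ)
    (hr : Module.rank ℝ
        ↥(Submodule.span ℝ
            {g : List A → ℝ | ∃ u : List A, g = fun v : List A => f (u ++ v)}) = r) :
    ∃ P S : Finset (List A),
      (∀ w ∈ P, ∀ u : List A, u <+: w → u ∈ P) ∧
      ([] : List A) ∈ P ∧ ([] : List A) ∈ S ∧
      (Matrix.of fun (u : ↥P) (v : ↥S) => f (↑u ++ ↑v)).rank = r :=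
  exists_complete_prefix_closed_basis_general f r hr
end
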